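/- Let a, b be real with 0 < a < b, let c be a real that is not a non-positive integer, and let z be real. Then ₁F₂(a; b, c; z) = (Γ(b)/(Γ(a)Γ(b−a))) ∫₀^1 t^{a−1} (1−t)^{b−a−1} · ₀F₁(−; c; z·t) dt. -/

import Mathlib

open scoped BigOperators

open MeasureTheory Set Filter

/-- The (rising) Pochhammer symbol `(a)_n` for a real number `a`. -/
noncomputable def poch (a : ℝ) (n : ℕ) : ℝ := (ascPochhammer ℝ n).eval a

/-- The hypergeometric series `₁F₂(a; b, c; x)`. -/
noncomputable def F12 (a b c x : ℝ) : ℝ :=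
  ∑' n : ℕ, poch a n / (poch b n * poch c n * (n.factorial : ℝ)) * x ^ n

/-- The hypergeometric series `₀F₁(-; c; x)`. -/
noncomputable def F01 (c x : ℝ) : ℝ :=
  ∑' n : ℕ, x ^ n / (poch c n * (n.factorial : ℝ))

lemma poch_succ (x : ℝ) (n : ℕ) : poch x (n + 1) = poch x n * (x + n) := by
  simp [poch, ascPochhammer_succ_right, Polynomial.eval_mul]

lemma poch_pos {x : ℝ} (hx : 0 < x) (n : ℕ) : 0 < poch x n := by
  induction n with
  | zero => simp [poch]
  | succ n ih => rw [poch_succ]; positivity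

lemma poch_ne_zero {x : ℝ} (hx : ∀ k : ℕ, x ≠ -(k : ℝ)) (n : ℕ) : poch x n ≠ 0 := by
  induction n with
  | zero => simp [poch]
  | succ n ih =>
    rw [poch_succ]
    refine mul_ne_zero ih ?_
    have := hx n
    intro h
    apply this
    linarith

lemma Gamma_add_nat' {x : ℝ} (hx : 0 < x) (n : ℕ) :
    Real.Gamma (x + n) = poch x n * Real.Gamma x := by
  induction n with
  | zero => simp [poch]
  | succ n ih =>
    have hxn : x + n ≠ 0 := by positivity
    have : (x + (n + 1 : ℕ) : ℝ) = (x + n) + 1 := by push_cast; ring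
    rw [this, Real.Gamma_add_one hxn, ih, poch_succ]
    ring

lemma complex_eq_real_on (p q : ℝ) :
    EqOn (fun x : ℝ => (x:ℂ)^((p:ℂ)-1) * ((1:ℂ)-x)^((q:ℂ)-1))
      (fun x : ℝ => ((x ^ (p-1) * (1-x) ^ (q-1) : ℝ) : ℂ)) (uIcc 0 1) := by
  intro x hx
  rw [uIcc_of_le zero_le_one] at hx
  obtain ⟨h0, h1⟩ := hx
  simp only
  rw [Complex.ofReal_mul, Complex.ofReal_cpow h0, Complex.ofReal_cpow (by linarith)]
  push_cast
  ring_nf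

lemma betaIntegrable {p q : ℝ} (hp : 0 < p) (hq : 0 < q) :
    IntegrableOn (fun t : ℝ => t ^ (p-1) * (1-t) ^ (q-1)) (Ioc (0:ℝ) 1) := by
  have h := Complex.betaIntegral_convergent (u := (p:ℂ)) (v := (q:ℂ)) (by simpa) (by simpa)
  rw [intervalIntegrable_iff, uIoc_of_le zero_le_one] at h
  have h2 : IntegrableOn (fun x : ℝ => ((x ^ (p-1) * (1-x) ^ (q-1) : ℝ) : ℂ)) (Ioc (0:ℝ) 1) := by
    apply h.congr_fun _ measurableSet_Ioc
    intro x hx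
    exact complex_eq_real_on p q (by rw [uIcc_of_le zero_le_one]; exact Ioc_subset_Icc_self hx)
  have := h2.re
  simp at this
  exact this

lemma betaValue {p q : ℝ} (hp : 0 < p) (hq : 0 < q) :
    ∫ t in Ioc (0:ℝ) 1, t ^ (p-1) * (1-t) ^ (q-1) =
      Real.Gamma p * Real.Gamma q / Real.Gamma (p+q) := by
  have key := Complex.Gamma_mul_Gamma_eq_betaIntegral (s := (p:ℂ)) (t := (q:ℂ)) (by simpa) (by simpa)
  rw [Complex.betaIntegral] at key
  have hcongr : (∫ x : ℝ in (0:ℝ)..1, (x:ℂ)^((p:ℂ)-1) * ((1:ℂ)-x)^((q:ℂ)-1))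
      = ((∫ x : ℝ in (0:ℝ)..1, x ^ (p-1) * (1-x) ^ (q-1) : ℝ) : ℂ) := by
    rw [intervalIntegral.integral_congr (complex_eq_real_on p q)]
    exact intervalIntegral.integral_ofReal
  rw [hcongr, ← Complex.ofReal_add, Complex.Gamma_ofReal, Complex.Gamma_ofReal,
    Complex.Gamma_ofReal, ← Complex.ofReal_mul, ← Complex.ofReal_mul, Complex.ofReal_inj] at key
  have hG : Real.Gamma (p + q) ≠ 0 := (Real.Gamma_pos_of_pos (by linarith)).ne'
  rw [← intervalIntegral.integral_of_le zero_le_one]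
  field_simp
  linarith [key]

lemma sumC {c : ℝ} (z : ℝ) :
    Summable (fun n : ℕ => |z ^ n / (poch c n * (n.factorial : ℝ))|) := by
  set f : ℕ → ℝ := fun n => |z ^ n / (poch c n * (n.factorial : ℝ))| with hf
  have hrec : ∀ n : ℕ, f (n + 1) = f n * |z / ((c + n) * (n + 1))| := by
    intro n
    rw [hf, ← abs_mul]
    simp only
    congr 1
    rw [div_mul_div_comm, poch_succ, pow_succ, Nat.factorial_succ]
    congr 1
    push_cast
    ring
  apply summable_of_ratio_norm_eventually_le (r := 1/2) (by norm_num)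
  filter_upwards [eventually_ge_atTop (⌈|c| + 2 * |z| + 1⌉₊)] with n hn
  have hn' : |c| + 2 * |z| + 1 ≤ (n : ℝ) := by
    calc |c| + 2 * |z| + 1 ≤ (⌈|c| + 2 * |z| + 1⌉₊ : ℝ) := Nat.le_ceil _
    _ ≤ n := by exact_mod_cast hn
  have h1 : 2 * |z| + 1 ≤ |c + n| := by
    have : (n : ℝ) - |c| ≤ c + n := by
      have := neg_abs_le c; linarith
    calc 2 * |z| + 1 ≤ (n:ℝ) - |c| := by linarith
    _ ≤ c + n := this
    _ ≤ |c + n| := le_abs_self _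
  have h2 : |z / ((c + n) * (n + 1))| ≤ 1/2 := by
    rw [abs_div, abs_mul]
    have hd : 2 * |z| + 1 ≤ |c + n| * |(n : ℝ) + 1| := by
      have h3 : (1:ℝ) ≤ |(n:ℝ) + 1| := by
        rw [abs_of_nonneg (by positivity)]; linarith [Nat.cast_nonneg (α := ℝ) n]
      calc 2 * |z| + 1 ≤ |c + n| := h1
      _ = |c + n| * 1 := (mul_one _).symm
      _ ≤ |c + n| * |(n:ℝ) + 1| := by
          apply mul_le_mul_of_nonneg_left h3 (abs_nonneg _)
    calc |z| / (|c + n| * |(n:ℝ)+1|) ≤ |z| / (2 * |z| + 1) := by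
          apply div_le_div_of_nonneg_left (abs_nonneg _) (by positivity) hd
    _ ≤ 1/2 := by
        rw [div_le_iff₀ (by positivity)]
        linarith [abs_nonneg z]
  calc ‖f (n+1)‖ = f n * |z / ((c + n) * (n + 1))| := by
        rw [hrec n, Real.norm_eq_abs, abs_of_nonneg (by positivity)]
  _ ≤ f n * (1/2) := mul_le_mul_of_nonneg_left h2 (abs_nonneg _)
  _ = 1/2 * ‖f n‖ := by rw [Real.norm_eq_abs, abs_of_nonneg (abs_nonneg _)]; ring

/-- Euler-type integral representation of `₁F₂` in terms of `₀F₁`. -/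
theorem stmt15 (a b c z : ℝ) (ha : 0 < a) (hab : a < b)
    (hc : ∀ n : ℕ, c ≠ -(n : ℝ)) :
    F12 a b c z =
      Real.Gamma b / (Real.Gamma a * Real.Gamma (b - a)) *
        ∫ t in (0 : ℝ)..1, t ^ (a - 1) * (1 - t) ^ (b - a - 1) * F01 c (z * t) := by
  have hq : 0 < b - a := sub_pos.mpr hab
  set C : ℕ → ℝ := fun n => z ^ n / (poch c n * (n.factorial : ℝ)) with hC
  set F : ℕ → ℝ → ℝ := fun n t =>
    t ^ (a - 1) * (1 - t) ^ (b - a - 1) * ((z * t) ^ n / (poch c n * (n.factorial : ℝ))) with hF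
  set μ : Measure ℝ := volume.restrict (Ioc (0:ℝ) 1) with hμ
  -- pointwise rewriting of F n
  have hF_eq : ∀ n : ℕ, F n = fun t => C n * (t ^ (a-1) * (1-t) ^ (b-a-1) * t ^ n) := by
    intro n
    funext t
    simp only [hF, hC, mul_pow]
    ring
  have hpow : ∀ (n : ℕ), ∀ t ∈ Ioc (0:ℝ) 1,
      t ^ (a-1) * (1-t) ^ (b-a-1) * t ^ n = t ^ (a + n - 1) * (1-t) ^ (b-a-1) := by
    intro n t ht
    rw [show a + (n:ℝ) - 1 = (a - 1) + (n:ℝ) by ring, Real.rpow_add ht.1, Real.rpow_natCast]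
    ring
  -- integrability of each F n
  have base : ∀ n : ℕ, IntegrableOn (fun t : ℝ => t ^ (a-1) * (1-t) ^ (b-a-1) * t ^ n)
      (Ioc (0:ℝ) 1) := by
    intro n
    have hb := betaIntegrable (p := a + n) (q := b - a) (by positivity) hq
    apply hb.congr_fun _ measurableSet_Ioc
    intro t ht
    exact (hpow n t ht).symm
  have hFint : ∀ n : ℕ, Integrable (F n) μ := by
    intro n
    rw [hF_eq n]
    exact ((base n).const_mul (C n))
  -- bound of the integral of the norm
  have wnonneg : ∀ t ∈ Ioc (0:ℝ) 1, 0 ≤ t ^ (a-1) * (1-t) ^ (b-a-1) := by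
    intro t ht
    have h1 : (0:ℝ) ≤ 1 - t := by linarith [ht.2]
    exact mul_nonneg (Real.rpow_nonneg ht.1.le _) (Real.rpow_nonneg h1 _)
  have hbound : ∀ n : ℕ, (∫ t, ‖F n t‖ ∂μ) ≤
      |C n| * ∫ t in Ioc (0:ℝ) 1, t ^ (a-1) * (1-t) ^ (b-a-1) := by
    intro n
    rw [← MeasureTheory.integral_const_mul]
    apply integral_mono_ae ((hFint n).norm) (((betaIntegrable ha hq).const_mul |C n|))
    rw [hμ]
    refine (ae_restrict_iff' measurableSet_Ioc).mpr ?_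
    filter_upwards with t ht
    have ht0 := ht.1
    have ht1 := ht.2
    have htn : t ^ n ≤ 1 := pow_le_one₀ (le_of_lt ht0) ht1
    have htn0 : (0:ℝ) ≤ t ^ n := by positivity
    have hw := wnonneg t ht
    rw [hF_eq n]
    rw [Real.norm_eq_abs, abs_mul, abs_of_nonneg (mul_nonneg hw htn0)]
    calc |C n| * (t ^ (a-1) * (1-t) ^ (b-a-1) * t ^ n)
        ≤ |C n| * (t ^ (a-1) * (1-t) ^ (b-a-1) * 1) := by
          apply mul_le_mul_of_nonneg_left _ (abs_nonneg _)
          apply mul_le_mul_of_nonneg_left htn hw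
      _ = |C n| * (t ^ (a-1) * (1-t) ^ (b-a-1)) := by ring
  have hsum : Summable (fun n : ℕ => ∫ t, ‖F n t‖ ∂μ) := by
    apply Summable.of_nonneg_of_le
      (fun n => integral_nonneg (fun t => norm_nonneg _)) hbound
    exact (sumC z (c := c)).mul_right _
  -- swap sum and integral
  have hswap := MeasureTheory.integral_tsum_of_summable_integral_norm hFint hsum
  -- identify the integrand
  have hint_eq : (∫ t in (0:ℝ)..1, t ^ (a - 1) * (1 - t) ^ (b - a - 1) * F01 c (z * t))
      = ∫ t, (∑' n, F n t) ∂μ := by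
    rw [intervalIntegral.integral_of_le zero_le_one, hμ]
    apply setIntegral_congr_fun measurableSet_Ioc
    intro t _
    simp only [F01, hF]
    exact (tsum_mul_left).symm
  -- compute each integral
  have hval : ∀ n : ℕ, (∫ t, F n t ∂μ) =
      C n * (Real.Gamma (a + n) * Real.Gamma (b - a) / Real.Gamma (b + n)) := by
    intro n
    rw [hF_eq n, MeasureTheory.integral_const_mul]
    congr 1
    have : (∫ t, (t ^ (a-1) * (1-t) ^ (b-a-1) * t ^ n) ∂μ)
        = ∫ t in Ioc (0:ℝ) 1, t ^ (a + n - 1) * (1-t) ^ (b-a-1) := by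
      rw [hμ]
      exact setIntegral_congr_fun measurableSet_Ioc (hpow n)
    rw [this, betaValue (by positivity) hq]
    congr 2
    push_cast
    ring
  -- final computation
  rw [hint_eq, ← hswap]
  rw [← tsum_mul_left]
  unfold F12
  apply tsum_congr
  intro n
  rw [hval n, hC]
  have hGa : Real.Gamma a ≠ 0 := (Real.Gamma_pos_of_pos ha).ne'
  have hGb : Real.Gamma b ≠ 0 := (Real.Gamma_pos_of_pos (ha.trans hab)).ne'
  have hGq : Real.Gamma (b - a) ≠ 0 := (Real.Gamma_pos_of_pos hq).ne'
  have hpa : Real.Gamma (a + n) = poch a n * Real.Gamma a := Gamma_add_nat' ha n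
  have hpb : Real.Gamma (b + n) = poch b n * Real.Gamma b := Gamma_add_nat' (ha.trans hab) n
  have hpbn : poch b n ≠ 0 := (poch_pos (ha.trans hab) n).ne'
  have hpcn : poch c n ≠ 0 := poch_ne_zero hc n
  have hfact : (n.factorial : ℝ) ≠ 0 := Nat.cast_ne_zero.mpr n.factorial_ne_zero
  rw [hpa, hpb]
  field_simp
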